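/- arXiv:2003.11604 — 2 statements merged into one kernel-verified Lean document; each statement's English description precedes it below -/
import Mathlib

section
/- Let (Δ) range over a finite family of events indexed by cells, where cell Δ 'appears' for sample R iff the colors in a fixed set D_Δ are all included in R and none of the colors in a fixed set L_Δ are included, with colors included independently with probability p. If at most one cell containing q can appear for R' with p = 1/4, i.e. ∑_{Δ∋q} (1/4)^{|D_Δ|}(3/4)^{|L_Δ|} ≤ 1, and each |D_Δ| ≤ d for a constant d, then for the sample R with p = 1/2 we have E[|L_{Δ(q)}|] = ∑_{Δ∋q} |L_Δ| (1/2)^{|D_Δ|}(1/2)^{|L_Δ|} = O(1). -/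
/-!
Each cell is compared with its own appearance probability at rate `1/4`. Lowering the rate
of the defining colors from `1/2` to `1/4` costs a factor `2^|D_Δ| ≤ 2^d`, and the conflict
weight `|L_Δ| (1/2)^|L_Δ|` is at most `2 (3/4)^|L_Δ|` by Bernoulli's inequality. Summing, the
expectation is at most `2 · 2^d` times the rate-`1/4` sum, which is at most `1`.
-/

lemma natCast_mul_pow_le_inv_mul_pow {b c : ℝ} (hb : 0 ≤ b) (hc : 0 < c) (n : ℕ) :
    (n : ℝ) * b ^ n ≤ c⁻¹ * ((1 + c) * b) ^ n := by
  have bernoulli : (n : ℝ) * c ≤ (1 + c) ^ n := by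
    linarith [one_add_mul_le_pow (by linarith : (-2 : ℝ) ≤ c) n]
  have hn : (n : ℝ) ≤ c⁻¹ * (1 + c) ^ n := by
    rwa [inv_mul_eq_div, le_div_iff₀ hc]
  rw [mul_pow, ← mul_assoc]
  exact mul_le_mul_of_nonneg_right hn (pow_nonneg hb n)

lemma natCast_mul_half_pow_le (n : ℕ) :
    (n : ℝ) * (1 / 2 : ℝ) ^ n ≤ 2 * (3 / 4 : ℝ) ^ n := by
  convert natCast_mul_pow_le_inv_mul_pow (b := 1 / 2) (c := 1 / 2) (by norm_num) (by norm_num) n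
    using 2 <;> norm_num

lemma half_pow_le_two_pow_mul_quarter_pow {m d : ℕ} (h : m ≤ d) :
    (1 / 2 : ℝ) ^ m ≤ 2 ^ d * (1 / 4 : ℝ) ^ m :=
  calc (1 / 2 : ℝ) ^ m = 2 ^ m * (1 / 4 : ℝ) ^ m := by rw [← mul_pow]; norm_num
    _ ≤ 2 ^ d * (1 / 4 : ℝ) ^ m := by gcongr; norm_num

lemma conflict_weight_le {D L d : ℕ} (hD : D ≤ d) :
    (L : ℝ) * (1 / 2 : ℝ) ^ D * (1 / 2 : ℝ) ^ L
      ≤ 2 * 2 ^ d * ((1 / 4 : ℝ) ^ D * (3 / 4 : ℝ) ^ L) :=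
  calc (L : ℝ) * (1 / 2 : ℝ) ^ D * (1 / 2 : ℝ) ^ L
        = (L * (1 / 2 : ℝ) ^ L) * (1 / 2 : ℝ) ^ D := by ring
    _ ≤ (2 * (3 / 4 : ℝ) ^ L) * (2 ^ d * (1 / 4 : ℝ) ^ D) :=
        mul_le_mul (natCast_mul_half_pow_le L) (half_pow_le_two_pow_mul_quarter_pow hD)
          (by positivity) (by positivity)
    _ = 2 * 2 ^ d * ((1 / 4 : ℝ) ^ D * (3 / 4 : ℝ) ^ L) := by ring

/-- Clarkson–Shor style comparison (Lemma 3.1).  Cells `Δ` (ranging over a finite index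
type) containing the query point have defining-color counts `D Δ ≤ d` and conflict-color
counts `L Δ`.  If `∑_Δ (1/4)^{D Δ} (3/4)^{L Δ} ≤ 1` (at most one cell containing `q`
appears for a sample with probability 1/4), then the expected conflict-list size for the
sample with probability 1/2 satisfies
`∑_Δ L Δ · (1/2)^{D Δ} (1/2)^{L Δ} ≤ 8 · 2^d = O(1)`. -/
theorem clarkson_shor_expected_conflict {ι : Type*} [Fintype ι]
    (D L : ι → ℕ) (d : ℕ) (hD : ∀ Δ, D Δ ≤ d)
    (h14 : (∑ Δ, ((1 : ℝ) / 4) ^ D Δ * ((3 : ℝ) / 4) ^ L Δ) ≤ 1) :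
    (∑ Δ, (L Δ : ℝ) * ((1 : ℝ) / 2) ^ D Δ * ((1 : ℝ) / 2) ^ L Δ)
      ≤ 8 * 2 ^ d :=
  calc (∑ Δ, (L Δ : ℝ) * ((1 : ℝ) / 2) ^ D Δ * ((1 : ℝ) / 2) ^ L Δ)
        ≤ ∑ Δ, 2 * 2 ^ d * (((1 : ℝ) / 4) ^ D Δ * ((3 : ℝ) / 4) ^ L Δ) :=
          Finset.sum_le_sum fun Δ _ => conflict_weight_le (hD Δ)
    _ = 2 * 2 ^ d * ∑ Δ, ((1 : ℝ) / 4) ^ D Δ * ((3 : ℝ) / 4) ^ L Δ := by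
          rw [Finset.mul_sum]
    _ ≤ 2 * 2 ^ d * 1 := by gcongr
    _ ≤ 8 * 2 ^ d := by linarith [pow_pos (two_pos : (0 : ℝ) < 2) d]
end

section
/- Let T be a rooted binary tree of depth D in which, independently for each of k items, the item follows a uniformly random root-to-leaf path (choosing left/right uniformly at each level). A node is 'heavy' if at least 2 items' paths pass through it. Then the expected number of heavy nodes in T is O(k), independent of D. -/
/-!
Count the heavy nodes of level `i` separately. There are only `2 ^ i` nodes at that level, and
a heavy node accounts for at least two ordered pairs of distinct items sharing their first `i`
bits, each pair doing so with probability `2 ^ (-i)`; hence the expected number of heavy nodes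
at level `i` is at most `min (2 ^ i) (k ^ 2 / 2 ^ i)`. This is geometric on either side of
`2 ^ i ≈ k`, so the sum over all levels is at most `4 k`.
-/

open Finset

namespace HeavyNodes

lemma two_le_card_offDiag {ι : Type*} [DecidableEq ι] {s : Finset ι} (hs : 2 ≤ #s) :
    2 ≤ #s.offDiag := by
  rw [offDiag_card]
  have := Nat.mul_le_mul_right #s hs
  omega

section Counting

variable {ι α β : Type*} [Fintype ι] [Fintype β] [DecidableEq β]

/-- With `π` the restriction of a path to its first `i` bits, this counts the heavy nodes of
level `i`. -/
def heavyCount (π : α → β) (f : ι → α) : ℕ :=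
  #{b | 2 ≤ #{j | π (f j) = b}}

lemma heavyCount_le_card (π : α → β) (f : ι → α) : heavyCount π f ≤ Fintype.card β :=
  card_filter_le _ _

lemma two_mul_heavyCount_le [DecidableEq ι] (π : α → β) (f : ι → α) :
    2 * heavyCount π f ≤ #{q ∈ (univ : Finset ι).offDiag | π (f q.1) = π (f q.2)} := by
  rw [card_eq_sum_card_fiberwise (f := fun q => π (f q.1)) (t := univ)
    (fun _ _ => mem_univ _), heavyCount, card_eq_sum_ones, mul_sum]
  calc ∑ b ∈ {b | 2 ≤ #{j | π (f j) = b}}, 2 * 1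
      ≤ ∑ b ∈ {b | 2 ≤ #{j | π (f j) = b}},
          #{q ∈ {q ∈ (univ : Finset ι).offDiag | π (f q.1) = π (f q.2)} |
            π (f q.1) = b} := by
        refine sum_le_sum fun b hb => (two_le_card_offDiag (mem_filter.1 hb).2).trans
          (card_le_card fun q hq => ?_)
        simp only [mem_offDiag, mem_filter, mem_univ, true_and] at hq ⊢
        exact ⟨⟨hq.2.2, hq.1.trans hq.2.1.symm⟩, hq.1⟩
    _ ≤ _ := sum_le_sum_of_subset (filter_subset _ _)

lemma card_filter_apply_eq_apply_mul_card [DecidableEq ι] {j j' : ι} (h : j ≠ j') :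
    #{g : ι → β | g j = g j'} * Fintype.card β = Fintype.card (ι → β) := by
  rw [← Fintype.card_subtype, ← Fintype.card_prod]
  refine Fintype.card_congr
    { toFun := fun gb => Function.update gb.1.1 j gb.2
      invFun := fun g => (⟨Function.update g j (g j'), by simp [h.symm]⟩, g j)
      left_inv := ?_
      right_inv := fun g => by simp }
  rintro ⟨⟨g, hg⟩, b⟩
  simp [h.symm, ← hg]

variable {γ : Type*} [DecidableEq ι] [Fintype α] [Fintype γ]

lemma card_filter_fst_eq_fst_mul_card (e : α ≃ β × γ) {j j' : ι} (h : j ≠ j') :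
    #{f : ι → α | (e (f j)).1 = (e (f j')).1} * Fintype.card β = Fintype.card (ι → α) := by
  let E : (ι → α) ≃ (ι → β) × (ι → γ) :=
    (Equiv.arrowCongr (Equiv.refl ι) e).trans (Equiv.arrowProdEquivProdArrow _ _ _)
  have hE : #{f : ι → α | (e (f j)).1 = (e (f j')).1} =
      #{g : ι → β | g j = g j'} * Fintype.card (ι → γ) := by
    rw [← card_univ, ← card_product, ← filter_product_left (fun g : ι → β => g j = g j'),
      univ_product_univ]
    exact card_equiv E (by simp [E])
  rw [hE, mul_right_comm, card_filter_apply_eq_apply_mul_card h, Fintype.card_congr E,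
    Fintype.card_prod]

lemma two_mul_sum_heavyCount_mul_card_le (e : α ≃ β × γ) :
    2 * (∑ f : ι → α, heavyCount (fun x => (e x).1) f) * Fintype.card β ≤
      Fintype.card ι * (Fintype.card ι - 1) * Fintype.card (ι → α) := by
  calc 2 * (∑ f : ι → α, heavyCount (fun x => (e x).1) f) * Fintype.card β
      ≤ (∑ f : ι → α, #{q ∈ (univ : Finset ι).offDiag | (e (f q.1)).1 = (e (f q.2)).1}) *
          Fintype.card β := by
        rw [mul_sum]
        gcongr with f
        exact two_mul_heavyCount_le _ f
    _ = ∑ q ∈ (univ : Finset ι).offDiag,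
          #{f : ι → α | (e (f q.1)).1 = (e (f q.2)).1} * Fintype.card β := by
        rw [← sum_mul]
        congr 1
        exact sum_card_bipartiteAbove_eq_sum_card_bipartiteBelow _
    _ = ∑ q ∈ (univ : Finset ι).offDiag, Fintype.card (ι → α) :=
        sum_congr rfl fun q hq => card_filter_fst_eq_fst_mul_card e (mem_offDiag.1 hq).2.2
    _ = _ := by rw [sum_const, offDiag_card, card_univ, smul_eq_mul, Nat.mul_sub_one]

end Counting

/-- Its first component is `x ∘ Fin.castLE hi` definitionally, so it certifies that all
prefixes of length `i` are equally likely. -/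
def prefixSuffixEquiv (σ : Type*) {D i : ℕ} (hi : i ≤ D) :
    (Fin D → σ) ≃ (Fin i → σ) × (Fin (D - i) → σ) :=
  (Equiv.arrowCongr ((finCongr (Nat.add_sub_cancel' hi).symm).trans finSumFinEquiv.symm)
    (Equiv.refl σ)).trans (Equiv.sumArrowEquivProdArrow _ _ _)

lemma sum_heavyCount_comp_castLE_le (k : ℕ) {D i : ℕ} (hi : i ≤ D) :
    ∑ f : Fin k → Fin D → Bool, (heavyCount (· ∘ Fin.castLE hi) f : ℝ) ≤
      min (2 ^ i) ((k : ℝ) ^ 2 / 2 ^ i) * Fintype.card (Fin k → Fin D → Bool) := by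
  set P := Fintype.card (Fin k → Fin D → Bool)
  set S := ∑ f : Fin k → Fin D → Bool, heavyCount (· ∘ Fin.castLE hi) f
  have hcard : Fintype.card (Fin i → Bool) = 2 ^ i := by simp
  have hS_le : S ≤ 2 ^ i * P :=
    calc S ≤ ∑ _f : Fin k → Fin D → Bool, 2 ^ i :=
          sum_le_sum fun f _ => hcard ▸ heavyCount_le_card _ f
      _ = 2 ^ i * P := by rw [sum_const, card_univ, smul_eq_mul, mul_comm]
  have hS_mul_le : S * 2 ^ i ≤ k ^ 2 * P := by
    have h := two_mul_sum_heavyCount_mul_card_le (ι := Fin k) (prefixSuffixEquiv Bool hi)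
    rw [hcard, Fintype.card_fin] at h
    calc S * 2 ^ i ≤ 2 * S * 2 ^ i := by gcongr; omega
      _ ≤ k * (k - 1) * P := h
      _ ≤ k ^ 2 * P := by gcongr; rw [sq]; exact Nat.mul_le_mul_left k (Nat.sub_le k 1)
  rw [← Nat.cast_sum, min_mul_of_nonneg _ _ (by positivity), le_min_iff, div_mul_eq_mul_div,
    le_div_iff₀ (by positivity)]
  exact ⟨by exact_mod_cast hS_le, by exact_mod_cast hS_mul_le⟩

lemma two_pow_clog_le (k : ℕ) : 2 ^ Nat.clog 2 k ≤ 2 * k + 1 := by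
  rcases le_or_gt k 1 with hk | hk
  · simp [Nat.clog_of_right_le_one hk]
  · have hlt := Nat.pow_pred_clog_lt_self one_lt_two hk
    rw [← Nat.succ_pred_eq_of_pos (Nat.clog_pos one_lt_two hk), pow_succ]
    omega

lemma sum_range_min_two_pow_le {c : ℝ} (hc : 0 ≤ c) (m N : ℕ) :
    ∑ n ∈ range N, min ((2 : ℝ) ^ n) (c / 2 ^ n) ≤ 2 ^ m - 1 + 2 * c / 2 ^ m := by
  calc ∑ n ∈ range N, min ((2 : ℝ) ^ n) (c / 2 ^ n)
      ≤ ∑ n ∈ range (m + N), min ((2 : ℝ) ^ n) (c / 2 ^ n) :=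
        sum_le_sum_of_subset_of_nonneg (range_subset_range.2 (Nat.le_add_left _ _))
          fun n _ _ => by positivity
    _ = ∑ n ∈ range m, min ((2 : ℝ) ^ n) (c / 2 ^ n) +
          ∑ n ∈ range N, min ((2 : ℝ) ^ (m + n)) (c / 2 ^ (m + n)) := sum_range_add _ _ _
    _ ≤ ∑ n ∈ range m, (2 : ℝ) ^ n + ∑ n ∈ range N, c / 2 ^ m * (1 / 2) ^ n := by
        gcongr with n _ n _
        · exact min_le_left _ _
        · rw [pow_add, one_div_pow, div_mul_div_comm, mul_one]
          exact min_le_right _ _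
    _ ≤ 2 ^ m - 1 + c / 2 ^ m * 2 := by
        rw [geom_sum_eq (by norm_num), ← mul_sum]
        gcongr
        · norm_num
        · exact sum_geometric_two_le N
    _ = 2 ^ m - 1 + 2 * c / 2 ^ m := by ring

lemma sum_range_min_two_pow_sq_le (k N : ℕ) :
    ∑ n ∈ range N, min ((2 : ℝ) ^ n) (k ^ 2 / 2 ^ n) ≤ 4 * k := by
  set m := Nat.clog 2 k
  have hkm : (k : ℝ) ≤ 2 ^ m := by exact_mod_cast Nat.le_pow_clog one_lt_two k
  have hmk : (2 : ℝ) ^ m ≤ 2 * k + 1 := by exact_mod_cast two_pow_clog_le k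
  have htail : 2 * (k : ℝ) ^ 2 / 2 ^ m ≤ 2 * k := by
    rw [div_le_iff₀ (by positivity)]
    nlinarith [(Nat.cast_nonneg k : (0 : ℝ) ≤ k)]
  linarith [sum_range_min_two_pow_le (sq_nonneg (k : ℝ)) m N]

end HeavyNodes

open HeavyNodes in
/-- Randomized binary tree over colors: each of `k` items independently follows a
uniformly random root-to-leaf path in a complete binary tree of depth `D` (choosing a
bit at each of the `D` levels).  A node at level `i` is identified with a bit-prefix of
length `i`; it is heavy if at least 2 items' paths pass through it.  Then the expected
number of heavy nodes is at most `C·k` for an absolute constant `C`, independent of `D`. -/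
theorem expected_heavy_nodes_linear :
    ∃ C : ℝ, 0 < C ∧ ∀ D k : ℕ,
      (∑ f : Fin k → Fin D → Bool,
          ((∑ i : Fin (D + 1),
              ((Finset.univ : Finset (Fin (i : ℕ) → Bool)).filter
                (fun p => 2 ≤ (Finset.univ.filter
                  (fun j : Fin k => ∀ t : Fin (i : ℕ),
                    f j ⟨(t : ℕ), lt_of_lt_of_le t.isLt (Nat.lt_succ_iff.mp i.isLt)⟩
                      = p t)).card)).card) : ℝ))
        / (Fintype.card (Fin k → Fin D → Bool) : ℝ)
      ≤ C * k := by
  refine ⟨4, by norm_num, fun D k => ?_⟩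
  set P := Fintype.card (Fin k → Fin D → Bool)
  have hP : (0 : ℝ) < P := by exact_mod_cast Fintype.card_pos
  rw [div_le_iff₀ hP, sum_comm]
  calc _ = ∑ i : Fin (D + 1), ∑ f : Fin k → Fin D → Bool,
          (heavyCount (· ∘ Fin.castLE (Nat.lt_succ_iff.mp i.isLt)) f : ℝ) := by
        simp only [heavyCount, funext_iff, Function.comp_apply]
        rfl
    _ ≤ ∑ i : Fin (D + 1), min (2 ^ (i : ℕ)) ((k : ℝ) ^ 2 / 2 ^ (i : ℕ)) * (P : ℝ) :=
        sum_le_sum fun i _ => sum_heavyCount_comp_castLE_le k _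
    _ = (∑ n ∈ range (D + 1), min ((2 : ℝ) ^ n) (k ^ 2 / 2 ^ n)) * P := by
        rw [← sum_mul, Fin.sum_univ_eq_sum_range (fun n => min ((2 : ℝ) ^ n) (k ^ 2 / 2 ^ n))]
    _ ≤ 4 * k * P := by
        gcongr
        exact sum_range_min_two_pow_sq_le k (D + 1)
end
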